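/- arXiv:2509.02012 — 4 statements merged into one kernel-verified Lean document; each statement's English description precedes it below -/
import Mathlib

section
/- Let α be a nonempty finite type, let μ be a probability mass function on α, and let the product measure μ^⊗k on α^k model k independent, identically distributed draws X_1,…,X_k from μ. Let S ⊆ α be a nonempty finite set of N 'coupons' such that μ(a) > 0 for every a ∈ S. Then the probability that at least one coupon of S does not appear among the k draws equals ∑_{J ⊆ S, J ≠ ∅} (−1)^{|J|+1} (1 − μ(J))^k, where μ(J) = ∑_{a∈J} μ(a). (Exact tail distribution of the coupon collector's problem, Theorem 1.) -/
/-!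
The tail event is the union, over the coupons `a ∈ S`, of the events "`a` is never drawn".
Inclusion–exclusion on the finite space `α^k` reduces its probability to those of the
intersections over nonempty `J ⊆ S`, i.e. of the events "every draw lands outside `J`", which by
independence have probability `(1 - μ(J))^k`.
-/

open MeasureTheory Finset

theorem MeasureTheory.measureReal_biUnion_inclusion_exclusion {ι β : Type*} [DecidableEq β]
    [MeasurableSpace β] [MeasurableSingletonClass β] (ν : Measure β) [IsFiniteMeasure ν]
    (s : Finset ι) (A : ι → Finset β) :
    ν.real (⋃ i ∈ s, (A i : Set β)) =
      ∑ t ∈ s.powerset with t.Nonempty, (-1 : ℝ) ^ (#t + 1) * ν.real (⋂ i ∈ t, (A i : Set β)) := by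
  have hUnion : (⋃ i ∈ s, (A i : Set β)) = ↑(s.biUnion A) := by simp
  rw [hUnion, ← sum_measureReal_singleton, inclusion_exclusion_sum_biUnion,
    ← sum_coe_sort (s.powerset.filter _)]
  refine sum_congr rfl fun t _ => ?_
  have hInter :
      ((t.1.inf' (mem_filter.1 t.2).2 A : Finset β) : Set β) = ⋂ i ∈ t.1, (A i : Set β) := by
    ext x; simp
  rw [zsmul_eq_mul, sum_measureReal_singleton, hInter]
  push_cast
  rfl

theorem MeasureTheory.measureReal_univ_pi_const {ι β : Type*} [Fintype ι] [MeasurableSpace β]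
    (ν : Measure β) [SigmaFinite ν] (T : Set β) :
    (Measure.pi fun _ : ι => ν).real (Set.univ.pi fun _ => T) = ν.real T ^ Fintype.card ι := by
  simp [measureReal_def, Measure.pi_pi]

theorem PMF.toMeasure_real_compl_finset {α : Type*} [MeasurableSpace α]
    [MeasurableSingletonClass α] (μ : PMF α) (J : Finset α) :
    μ.toMeasure.real (↑J)ᶜ = 1 - ∑ a ∈ J, (μ a).toReal := by
  rw [probReal_compl_eq_one_sub J.measurableSet, measureReal_def, PMF.toMeasure_apply_finset,
    ENNReal.toReal_sum fun a _ => μ.apply_ne_top a]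

theorem coupon_collector_tail_dist_general
    {α : Type*} [Fintype α] [DecidableEq α]
    [MeasurableSpace α] [MeasurableSingletonClass α]
    (μ : PMF α) (k : ℕ) (S : Finset α) :
    ((Measure.pi fun _ : Fin k => μ.toMeasure)
        {x : Fin k → α | ∃ a ∈ S, ∀ j : Fin k, x j ≠ a}).toReal
      = ∑ J ∈ S.powerset.filter (fun J => J ≠ ∅),
          (-1 : ℝ) ^ (J.card + 1) * (1 - ∑ a ∈ J, (μ a).toReal) ^ k := by
  set missing : α → Finset (Fin k → α) := fun a => {x | ∀ j, x j ≠ a}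
  have hUnion : {x : Fin k → α | ∃ a ∈ S, ∀ j, x j ≠ a} = ⋃ a ∈ S, (missing a : Set _) := by
    ext x; simp [missing]
  have hInter (J : Finset α) :
      ⋂ a ∈ J, (missing a : Set (Fin k → α)) = Set.univ.pi fun _ => (J : Set α)ᶜ := by
    ext x
    simp only [missing]
    simpa using ⟨fun h j hj => h _ hj j rfl, fun h a ha j hja => h j (hja ▸ ha)⟩
  rw [← measureReal_def, hUnion, measureReal_biUnion_inclusion_exclusion]
  refine sum_congr (by simp [nonempty_iff_ne_empty]) fun J _ => ?_
  rw [hInter, measureReal_univ_pi_const, Fintype.card_fin, PMF.toMeasure_real_compl_finset]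

/-- Exact tail distribution of the coupon collector's problem (Theorem 1):
the probability (under k i.i.d. draws from `μ`) that at least one coupon of `S`
does not appear among the k draws equals the inclusion–exclusion sum
`∑_{∅ ≠ J ⊆ S} (−1)^{|J|+1} (1 − μ(J))^k`. -/
theorem coupon_collector_tail_dist
    {α : Type*} [Fintype α] [Nonempty α] [DecidableEq α]
    [MeasurableSpace α] [MeasurableSingletonClass α]
    (μ : PMF α) (k : ℕ) (S : Finset α)
    (hS : S.Nonempty) (hpos : ∀ a ∈ S, 0 < μ a) :
    ((Measure.pi fun _ : Fin k => μ.toMeasure)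
        {x : Fin k → α | ∃ a ∈ S, ∀ j : Fin k, x j ≠ a}).toReal
      = ∑ J ∈ S.powerset.filter (fun J => J ≠ ∅),
          (-1 : ℝ) ^ (J.card + 1) * (1 - ∑ a ∈ J, (μ a).toReal) ^ k :=
  coupon_collector_tail_dist_general μ k S
end

section
/- Let α be a nonempty finite type, let μ be a probability mass function on α, and model k i.i.d. draws from μ by the product measure on α^k. Let S ⊆ α be a nonempty finite set of coupons with μ(a) > 0 for every a ∈ S. Then the probability that every coupon of S appears among the k draws equals ∑_{J ⊆ S} (−1)^{|J|} (1 − μ(J))^k, where μ(J) = ∑_{a∈J} μ(a) and the empty set contributes the term 1. -/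
/-!
The collection event is the intersection, over `a ∈ S`, of the complements of the events
"`a` is never drawn". By inclusion–exclusion its probability is the alternating sum, over
`J ⊆ S`, of the probabilities that no coupon of `J` is drawn, and by independence of the draws
that probability is `μ(Jᶜ)^k = (1 - μ(J))^k`.
-/

open MeasureTheory Finset

section

variable {ι α : Type*}

lemma PMF.sum_toReal_compl [Fintype α] [DecidableEq α] (μ : PMF α) (J : Finset α) :
    ∑ a ∈ Jᶜ, (μ a).toReal = 1 - ∑ a ∈ J, (μ a).toReal := by
  have h : ∑ a, (μ a).toReal = 1 := by
    rw [← ENNReal.toReal_sum fun a _ => μ.apply_ne_top a, ← tsum_fintype (L := .unconditional _),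
      μ.tsum_coe, ENNReal.toReal_one]
  rw [← h, ← sum_add_sum_compl J]
  ring

lemma PMF.measureReal_pi_toMeasure [Fintype ι] [MeasurableSpace α] [MeasurableSingletonClass α]
    (μ : PMF α) (s : Finset (ι → α)) :
    (Measure.pi fun _ : ι => μ.toMeasure).real s = ∑ x ∈ s, ∏ i, (μ (x i)).toReal := by
  rw [← sum_measureReal_singleton]
  refine sum_congr rfl fun x _ => ?_
  simp [measureReal_def, ENNReal.toReal_prod, PMF.toMeasure_apply_singleton]

lemma Fintype.inf_piFinset_compl_singleton [Fintype ι] [DecidableEq ι] [Fintype α]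
    [DecidableEq α] (J : Finset α) :
    J.inf (fun a => piFinset fun _ : ι => ({a}ᶜ : Finset α)) = piFinset fun _ => Jᶜ := by
  ext x
  simp only [mem_inf, mem_piFinset, mem_compl, mem_singleton]
  exact ⟨fun h i hi => h _ hi i rfl, fun h a ha i hi => h i (hi ▸ ha)⟩

end

theorem coupon_collector_collection_dist_general
    {α : Type*} [Fintype α]
    [MeasurableSpace α] [MeasurableSingletonClass α]
    (μ : PMF α) (k : ℕ) (S : Finset α) :
    ((Measure.pi fun _ : Fin k => μ.toMeasure)
        {x : Fin k → α | ∀ a ∈ S, ∃ j : Fin k, x j = a}).toReal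
      = ∑ J ∈ S.powerset,
          (-1 : ℝ) ^ J.card * (1 - ∑ a ∈ J, (μ a).toReal) ^ k := by
  classical
  have hcollect : {x : Fin k → α | ∀ a ∈ S, ∃ j, x j = a}
      = ↑(S.inf fun a => (Fintype.piFinset fun _ : Fin k => ({a}ᶜ : Finset α))ᶜ) := by
    ext x
    simp [mem_inf]
  rw [← measureReal_def, hcollect, PMF.measureReal_pi_toMeasure,
    inclusion_exclusion_sum_inf_compl]
  refine sum_congr rfl fun J _ => ?_
  rw [Fintype.inf_piFinset_compl_singleton,
    ← prod_univ_sum (fun _ => Jᶜ) (fun _ a => (μ a).toReal), prod_const, Finset.card_fin,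
    PMF.sum_toReal_compl, zsmul_eq_mul, Int.cast_pow, Int.cast_neg, Int.cast_one]

/-- Inclusion–exclusion formula for the collection event: the probability
(under k i.i.d. draws from `μ`) that every coupon of `S` appears among the
k draws equals `∑_{J ⊆ S} (−1)^{|J|} (1 − μ(J))^k`. -/
theorem coupon_collector_collection_dist
    {α : Type*} [Fintype α] [Nonempty α] [DecidableEq α]
    [MeasurableSpace α] [MeasurableSingletonClass α]
    (μ : PMF α) (k : ℕ) (S : Finset α)
    (hS : S.Nonempty) (hpos : ∀ a ∈ S, 0 < μ a) :
    ((Measure.pi fun _ : Fin k => μ.toMeasure)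
        {x : Fin k → α | ∀ a ∈ S, ∃ j : Fin k, x j = a}).toReal
      = ∑ J ∈ S.powerset,
          (-1 : ℝ) ^ J.card * (1 - ∑ a ∈ J, (μ a).toReal) ^ k :=
  coupon_collector_collection_dist_general μ k S
end

section
/- Let α be a nonempty finite type, let μ be a probability mass function on α, and model k i.i.d. draws from μ by the product measure on α^k. Let S ⊆ α be a nonempty finite set of coupons with μ(a) > 0 for every a ∈ S, let ε > 0, and suppose k ∈ ℕ satisfies ∑_{J ⊆ S, J ≠ ∅} (−1)^{|J|+1} (1 − μ(J))^k < ε, where μ(J) = ∑_{a∈J} μ(a). Then the probability that every coupon of S appears among the k draws is strictly greater than 1 − ε. -/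
/-!
The coverage event is the complement of `⋃ a ∈ S, missEvent a`. The events `missEvent a`,
`a ∈ J`, all occur exactly when every draw avoids `J`, which by independence of the draws has
probability `(1 - μ(J))^k`; inclusion–exclusion therefore turns the hypothesis on `k` into the
exact identity `P(coverage) = 1 - ∑_{∅ ≠ J ⊆ S} (-1)^(|J|+1) (1 - μ(J))^k`.
-/

open MeasureTheory Finset

section

variable {ι α : Type*}

variable (ι) in
def missEvent (a : α) : Set (ι → α) := {x | ∀ i, x i ≠ a}

lemma biInter_missEvent (J : Finset α) :
    ⋂ a ∈ J, missEvent ι a = {x | ∀ i, x i ∉ (J : Set α)} := by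
  ext x; simp only [missEvent, Set.mem_iInter, Set.mem_ofPred_eq, Finset.mem_coe]; grind

lemma compl_biUnion_missEvent (S : Finset α) :
    (⋃ a ∈ S, missEvent ι a)ᶜ = {x | ∀ a ∈ S, ∃ i, x i = a} := by
  ext x; simp [missEvent]

variable [Fintype ι] [MeasurableSpace α]

lemma PMF.measureReal_toMeasure_finset [MeasurableSingletonClass α] (μ : PMF α)
    (s : Finset α) : μ.toMeasure.real s = ∑ a ∈ s, (μ a).toReal := by
  rw [measureReal_def, μ.toMeasure_apply_finset,
    ENNReal.toReal_sum fun a _ => μ.apply_ne_top a]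

lemma measureReal_pi_setOf_forall_notMem (ν : Measure α) [IsProbabilityMeasure ν] {s : Set α}
    (hs : MeasurableSet s) :
    (Measure.pi fun _ : ι => ν).real {x | ∀ i, x i ∉ s} = (1 - ν.real s) ^ Fintype.card ι := by
  have hpi : {x : ι → α | ∀ i, x i ∉ s} = Set.univ.pi fun _ => sᶜ := by
    ext x; simp
  rw [hpi, measureReal_def, Measure.pi_pi, ENNReal.toReal_prod, Finset.prod_const,
    ← measureReal_def, probReal_compl_eq_one_sub hs, Finset.card_univ]

variable [MeasurableSingletonClass α]

lemma measurableSet_missEvent (a : α) : MeasurableSet (missEvent ι a) := by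
  have hpi : missEvent ι a = Set.univ.pi fun _ => {a}ᶜ := by
    ext x; simp [missEvent]
  rw [hpi]
  exact MeasurableSet.univ_pi fun _ => (measurableSet_singleton a).compl

lemma measureReal_pi_biUnion_missEvent (ν : Measure α) [IsProbabilityMeasure ν]
    (S : Finset α) :
    (Measure.pi fun _ : ι => ν).real (⋃ a ∈ S, missEvent ι a)
      = ∑ J ∈ S.powerset with J.Nonempty,
          (-1 : ℝ) ^ (#J + 1) * (1 - ν.real J) ^ Fintype.card ι := by
  rw [measureReal_biUnion_eq_sum_powerset fun a _ => measurableSet_missEvent a]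
  refine Finset.sum_congr rfl fun J _ => ?_
  rw [biInter_missEvent, measureReal_pi_setOf_forall_notMem ν J.measurableSet]

lemma measureReal_pi_setOf_forall_exists_eq (ν : Measure α) [IsProbabilityMeasure ν]
    (S : Finset α) :
    (Measure.pi fun _ : ι => ν).real {x | ∀ a ∈ S, ∃ i, x i = a}
      = 1 - ∑ J ∈ S.powerset with J.Nonempty,
          (-1 : ℝ) ^ (#J + 1) * (1 - ν.real J) ^ Fintype.card ι := by
  rw [← compl_biUnion_missEvent, probReal_compl_eq_one_sub
    (S.measurableSet_biUnion fun a _ => measurableSet_missEvent a),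
    measureReal_pi_biUnion_missEvent]

end

theorem coupon_collector_coverage_general
    {α : Type*} [DecidableEq α]
    [MeasurableSpace α] [MeasurableSingletonClass α]
    (μ : PMF α) (k : ℕ) (S : Finset α)
    (ε : ℝ)
    (hk : ∑ J ∈ S.powerset.filter (fun J => J ≠ ∅),
            (-1 : ℝ) ^ (J.card + 1) * (1 - ∑ a ∈ J, (μ a).toReal) ^ k < ε) :
    1 - ε <
      ((Measure.pi fun _ : Fin k => μ.toMeasure)
        {x : Fin k → α | ∀ a ∈ S, ∃ j : Fin k, x j = a}).toReal := by
  rw [← measureReal_def, measureReal_pi_setOf_forall_exists_eq, Fintype.card_fin]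
  simp only [PMF.measureReal_toMeasure_finset, Finset.nonempty_iff_ne_empty]
  linarith

/-- If `k` satisfies `∑_{∅ ≠ J ⊆ S} (−1)^{|J|+1} (1 − μ(J))^k < ε`, then the
probability (under k i.i.d. draws from `μ`) that every coupon of `S` appears
among the k draws is strictly greater than `1 − ε`. -/
theorem coupon_collector_coverage
    {α : Type*} [Fintype α] [Nonempty α] [DecidableEq α]
    [MeasurableSpace α] [MeasurableSingletonClass α]
    (μ : PMF α) (k : ℕ) (S : Finset α)
    (hS : S.Nonempty) (hpos : ∀ a ∈ S, 0 < μ a)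
    (ε : ℝ) (hε : 0 < ε)
    (hk : ∑ J ∈ S.powerset.filter (fun J => J ≠ ∅),
            (-1 : ℝ) ^ (J.card + 1) * (1 - ∑ a ∈ J, (μ a).toReal) ^ k < ε) :
    1 - ε <
      ((Measure.pi fun _ : Fin k => μ.toMeasure)
        {x : Fin k → α | ∀ a ∈ S, ∃ j : Fin k, x j = a}).toReal :=
  coupon_collector_coverage_general μ k S ε hk
end

section
/- Let ε ∈ (0,1) and let 0 < p̂ ≤ p ≤ 1/2. Define k := min{m ∈ ℕ : m ≥ 1 ∧ p^m + (1 − p)^m < ε} and k̂ := min{m ∈ ℕ : m ≥ 1 ∧ p̂^m + (1 − p̂)^m < ε}. Then k̂ ≥ k; that is, underestimating the assertion violation probability can only increase the number of test executions required by ProbTest. -/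
/-!
On `[0, 1/2]` the tail `x ↦ x^m + (1 - x)^m` is antitone, its derivative being
`m (x^(m-1) - (1-x)^(m-1)) ≤ 0`. Hence every admissible `m` for `p̂` is admissible for `p`, and
the infimum over the larger set is smaller. The set for `p̂` is nonempty because the tail tends
to `0`; without this, `sInf ∅ = 0` would break the comparison.
-/

open Filter Topology Set

theorem antitoneOn_pow_add_one_sub_pow (m : ℕ) :
    AntitoneOn (fun x : ℝ => x ^ m + (1 - x) ^ m) (Icc 0 (1 / 2)) := by
  refine antitoneOn_of_hasDerivWithinAt_nonpos (convex_Icc 0 (1 / 2)) (by fun_prop)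
    (f' := fun x => m * x ^ (m - 1) - m * (1 - x) ^ (m - 1)) (fun x _ => ?_) ?_
  · have h : HasDerivAt (fun x : ℝ => x ^ m + (1 - x) ^ m)
        (m * x ^ (m - 1) * 1 + m * (1 - x) ^ (m - 1) * -1) x :=
      ((hasDerivAt_id' x).pow m).add (((hasDerivAt_id' x).const_sub 1).pow m)
    exact h.hasDerivWithinAt.congr_deriv (by ring)
  · rw [interior_Icc]
    rintro x ⟨hx0, hx1⟩
    have : x ^ (m - 1) ≤ (1 - x) ^ (m - 1) := pow_le_pow_left₀ hx0.le (by linarith) _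
    have : (0 : ℝ) ≤ m := m.cast_nonneg
    nlinarith

theorem tendsto_pow_add_one_sub_pow_atTop_nhds_zero {p : ℝ} (hp0 : 0 < p) (hp1 : p < 1) :
    Tendsto (fun m : ℕ => p ^ m + (1 - p) ^ m) atTop (𝓝 0) := by
  simpa using (tendsto_pow_atTop_nhds_zero_of_lt_one hp0.le hp1).add
    (tendsto_pow_atTop_nhds_zero_of_lt_one (sub_nonneg.2 hp1.le) (sub_lt_self 1 hp0))

theorem probtest_k_underestimate_general
    (ε : ℝ) (hε0 : 0 < ε)
    (p phat : ℝ) (hphat : 0 < phat) (hle : phat ≤ p) (hp : p ≤ 1 / 2) :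
    sInf {m : ℕ | 1 ≤ m ∧ p ^ m + (1 - p) ^ m < ε} ≤
      sInf {m : ℕ | 1 ≤ m ∧ phat ^ m + (1 - phat) ^ m < ε} := by
  have hsub : {m : ℕ | 1 ≤ m ∧ phat ^ m + (1 - phat) ^ m < ε} ⊆
      {m : ℕ | 1 ≤ m ∧ p ^ m + (1 - p) ^ m < ε} := fun m ⟨hm, hlt⟩ =>
    ⟨hm, (antitoneOn_pow_add_one_sub_pow m ⟨hphat.le, hle.trans hp⟩ ⟨hphat.le.trans hle, hp⟩
      hle).trans_lt hlt⟩
  have hne : {m : ℕ | 1 ≤ m ∧ phat ^ m + (1 - phat) ^ m < ε}.Nonempty :=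
    (((tendsto_pow_add_one_sub_pow_atTop_nhds_zero hphat (by linarith)).eventually
      (gt_mem_nhds hε0)).and (eventually_ge_atTop 1)).exists.imp fun _ h => ⟨h.2, h.1⟩
  exact csInf_le_csInf (OrderBot.bddBelow _) hne hsub

/-- Underestimating the assertion violation probability (`p̂ ≤ p`) can only
increase the number of test executions required by ProbTest: with
`k = min{m ≥ 1 : p^m + (1−p)^m < ε}` and
`k̂ = min{m ≥ 1 : p̂^m + (1−p̂)^m < ε}`, we have `k̂ ≥ k`. -/
theorem probtest_k_underestimate
    (ε : ℝ) (hε0 : 0 < ε) (hε1 : ε < 1)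
    (p phat : ℝ) (hphat : 0 < phat) (hle : phat ≤ p) (hp : p ≤ 1 / 2) :
    sInf {m : ℕ | 1 ≤ m ∧ p ^ m + (1 - p) ^ m < ε} ≤
      sInf {m : ℕ | 1 ≤ m ∧ phat ^ m + (1 - phat) ^ m < ε} :=
  probtest_k_underestimate_general ε hε0 p phat hphat hle hp
end
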